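/- R₀ proves: for every well-behaved x and every numeral n̄, (a) x < n̄ ∨ n̄ ≤ x, and (b) x ≤ n̄ ∨ n̄ < x. -/

import Mathlib

open FirstOrder FirstOrder.Language

/-- Function symbols of the arithmetic language `L_a = {0, S, +, ×, ≤}`. -/
inductive AFunc : ℕ → Type
  | zero : AFunc 0
  | succ : AFunc 1
  | add : AFunc 2
  | mul : AFunc 2

/-- Relation symbols of `L_a`: the single binary relation `≤`. -/
inductive ARel : ℕ → Type
  | le : ARel 2

/-- The first-order language of arithmetic `L_a = {0, S, +, ×, ≤}`. -/
def La : Language := ⟨AFunc, ARel⟩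

/-- The standard model ℕ as an `La`-structure. -/
instance : La.Structure ℕ where
  funMap := fun {n} f => match f with
    | .zero => fun _ => 0
    | .succ => fun v => v 0 + 1
    | .add => fun v => v 0 + v 1
    | .mul => fun v => v 0 * v 1
  RelMap := fun {n} r => match r with
    | .le => fun v => v 0 ≤ v 1

/-- The term `0`. -/
def zeroT {β : Type} : La.Term β := Term.func AFunc.zero ![]
/-- The term `S t`. -/
def succT {β : Type} (t : La.Term β) : La.Term β := Term.func AFunc.succ ![t]
/-- The term `t + u`. -/
def addT {β : Type} (t u : La.Term β) : La.Term β := Term.func AFunc.add ![t, u]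
/-- The term `t × u`. -/
def mulT {β : Type} (t u : La.Term β) : La.Term β := Term.func AFunc.mul ![t, u]

/-- The numeral `S…S0`. -/
def num {β : Type} : ℕ → La.Term β
  | 0 => zeroT
  | n + 1 => succT (num n)

/-- The atomic formula `t ≤ u`. -/
def leF {α : Type} {n : ℕ} (t u : La.Term (α ⊕ Fin n)) : La.BoundedFormula α n :=
  Relations.boundedFormula ARel.le ![t, u]

/-- The formula `t < u`, i.e. `t ≤ u ∧ t ≠ u`. -/
def ltF {α : Type} {n : ℕ} (t u : La.Term (α ⊕ Fin n)) : La.BoundedFormula α n :=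
  leF t u ⊓ ∼(t =' u)

/-- Lift a term of context `n` to context `n+1`. -/
def liftT {α : Type} {n : ℕ} (t : La.Term (α ⊕ Fin n)) : La.Term (α ⊕ Fin (n + 1)) :=
  t.relabel (Sum.map id Fin.castSucc)

/-- The de Bruijn variable `i` as a term. -/
def vr {α : Type} {n : ℕ} (i : Fin n) : La.Term (α ⊕ Fin n) := Term.var (Sum.inr i)

/-- The disjunction `⋁_{i ≤ n} x = ī` (with `x` the de Bruijn variable 0). -/
def disjEq : ℕ → La.BoundedFormula Empty 1
  | 0 => (vr 0 : La.Term _) =' num 0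
  | n + 1 => disjEq n ⊔ ((vr 0 : La.Term _) =' num (n + 1))

/-- Axiom R1: `m̄ + n̄ = (m+n)̄`. -/
def axR1 (m n : ℕ) : La.Sentence := addT (num m) (num n) =' num (m + n)
/-- Axiom R2: `m̄ × n̄ = (m·n)̄`. -/
def axR2 (m n : ℕ) : La.Sentence := mulT (num m) (num n) =' num (m * n)
/-- Axiom R3: `m̄ ≠ n̄` (for `m ≠ n`). -/
def axR3 (m n : ℕ) : La.Sentence := ∼((num m : La.Term _) =' num n)
/-- Axiom R4: `∀x (x ≤ n̄ → ⋁_{i ≤ n} x = ī)`. -/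
def axR4 (n : ℕ) : La.Sentence := ∀' (leF (vr 0) (num n) ⟹ disjEq n)
/-- Axiom R5': `m̄ ≤ n̄` (for `m ≤ n`). -/
def axR5' (m n : ℕ) : La.Sentence := leF (num m : La.Term (Empty ⊕ Fin 0)) (num n)

/-- The theory `R₀`, axiomatized by R1–R4 and R5'. -/
def R0 : La.Theory :=
  {φ | ∃ m n : ℕ, φ = axR1 m n} ∪
  {φ | ∃ m n : ℕ, φ = axR2 m n} ∪
  {φ | ∃ m n : ℕ, m ≠ n ∧ φ = axR3 m n} ∪
  {φ | ∃ n : ℕ, φ = axR4 n} ∪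
  {φ | ∃ m n : ℕ, m ≤ n ∧ φ = axR5' m n}

/-- `wb(t)`: `t` is well-behaved, i.e. `0 ≤ t ∧ ∀y < t, S y ≤ t`. -/
def wbF {n : ℕ} (t : La.Term (Empty ⊕ Fin n)) : La.BoundedFormula Empty n :=
  leF zeroT t ⊓
    ∀' (ltF (Term.var (Sum.inr (Fin.last n))) (liftT t) ⟹
      leF (succT (Term.var (Sum.inr (Fin.last n)))) (liftT t))

/-- Witness comparison `(∃x φ₀) ≤ (∃y ψ₀)`: `∃x (φ₀(x) ∧ ∀y < x ¬ψ₀(y))`. -/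
def wcLe (φ₀ ψ₀ : La.BoundedFormula Empty 1) : La.Sentence :=
  ∃' (φ₀ ⊓ ∀' (ltF (vr 1) (vr 0) ⟹ ∼(ψ₀.liftAt 1 0)))

/-- Witness comparison `(∃x φ₀) < (∃y ψ₀)`: `∃x (φ₀(x) ∧ ∀y ≤ x ¬ψ₀(y))`. -/
def wcLt (φ₀ ψ₀ : La.BoundedFormula Empty 1) : La.Sentence :=
  ∃' (φ₀ ⊓ ∀' (leF (vr 1) (vr 0) ⟹ ∼(ψ₀.liftAt 1 0)))

section Sem

variable {M : Type*} [La.Structure M]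

/-- Semantic `≤`. -/
def leM (a b : M) : Prop := Structure.RelMap (L := La) ARel.le ![a, b]
/-- Semantic successor. -/
def sM (a : M) : M := Structure.funMap (L := La) AFunc.succ ![a]

variable (M) in
/-- Semantic numeral. -/
def nmM : ℕ → M
  | 0 => Structure.funMap (L := La) AFunc.zero ![]
  | n + 1 => sM (nmM n)

@[simp] lemma realize_num {β : Type} (v : β → M) :
    ∀ n, (num n : La.Term β).realize v = nmM M n
  | 0 => by
      simp [num, zeroT, nmM, Term.realize]
      congr; funext i; exact i.elim0
  | n + 1 => by
      simp [num, succT, nmM, sM, Term.realize]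
      congr; funext i
      fin_cases i
      simp [realize_num v n]

@[simp] lemma realize_leF {n : ℕ} (t u : La.Term (Empty ⊕ Fin n)) (v : Empty → M)
    (xs : Fin n → M) :
    (leF t u).Realize v xs ↔ leM (t.realize (Sum.elim v xs)) (u.realize (Sum.elim v xs)) := by
  show Structure.RelMap (L := La) (ARel.le : La.Relations 2)
    (fun i => (![t, u] i).realize (Sum.elim v xs)) ↔ _
  unfold leM
  refine iff_of_eq (congrArg _ ?_)
  funext i; fin_cases i <;> simp

end Sem


section Sem2

variable {M : Type*} [La.Structure M]

def ltM (a b : M) : Prop := leM a b ∧ a ≠ b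

@[simp] lemma realize_ltF {n : ℕ} (t u : La.Term (Empty ⊕ Fin n)) (v : Empty → M)
    (xs : Fin n → M) :
    (ltF t u).Realize v xs ↔ ltM (t.realize (Sum.elim v xs)) (u.realize (Sum.elim v xs)) := by
  simp [ltF, ltM, BoundedFormula.realize_inf, BoundedFormula.realize_not]

@[simp] lemma realize_succT {β : Type} (t : La.Term β) (v : β → M) :
    (succT t).realize v = sM (t.realize v) := by
  simp [succT, sM, Term.realize]
  congr; funext i; fin_cases i; simp

@[simp] lemma realize_zeroT {β : Type} (v : β → M) :
    (zeroT : La.Term β).realize v = nmM M 0 := by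
  simp [zeroT, nmM, Term.realize]
  congr; funext i; exact i.elim0

@[simp] lemma realize_liftT {n : ℕ} (t : La.Term (Empty ⊕ Fin n)) (v : Empty → M)
    (xs : Fin (n + 1) → M) :
    (liftT t).realize (Sum.elim v xs) = t.realize (Sum.elim v (fun i => xs i.castSucc)) := by
  simp only [liftT, Term.realize_relabel]
  congr 1; funext i; cases i <;> simp

/-- Semantic well-behavedness. -/
def wbM (a : M) : Prop := leM (nmM M 0) a ∧ ∀ y : M, ltM y a → leM (sM y) a

@[simp] lemma funMap_zero_eq (f : Fin 0 → M) :
    Structure.funMap (L := La) AFunc.zero f = nmM M 0 := by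
  show _ = Structure.funMap (L := La) AFunc.zero ![]
  congr; funext i; exact i.elim0

@[simp] lemma funMap_succ_eq (f : Fin 1 → M) :
    Structure.funMap (L := La) AFunc.succ f = sM (f 0) := by
  unfold sM; congr; funext i; fin_cases i; rfl

@[simp] lemma sM_nmM (n : ℕ) : sM (nmM M n) = nmM M (n + 1) := rfl

lemma realize_wbF (v : Empty → M) (xs : Fin 1 → M) :
    (wbF (vr 0)).Realize v xs ↔ wbM (xs 0) := by
  simp only [wbF, BoundedFormula.realize_inf, BoundedFormula.realize_all,
    BoundedFormula.realize_imp, realize_leF, realize_ltF,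
    liftT, vr, Term.realize_relabel, Term.realize, Sum.elim_inr, Sum.map,
    Function.comp, Sum.elim_comp_map, wbM, Fin.snoc_last, Fin.snoc_castSucc, id,
    funMap_zero_eq, funMap_succ_eq, Matrix.cons_val_zero, succT, Matrix.cons_val_fin_one,
    zeroT]

lemma realize_disjEq (v : Empty → M) (xs : Fin 1 → M) :
    ∀ n : ℕ, (disjEq n).Realize v xs ↔ ∃ i ≤ n, xs 0 = nmM M i
  | 0 => by
    simp only [disjEq, BoundedFormula.realize_bdEqual, vr, Term.realize, Sum.elim_inr,
      realize_num, funMap_zero_eq, funMap_succ_eq, Matrix.cons_val_zero, Matrix.cons_val_fin_one]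
    constructor
    · intro h; exact ⟨0, le_refl _, h⟩
    · rintro ⟨i, hi, h⟩; interval_cases i; exact h
  | n + 1 => by
    simp only [disjEq, BoundedFormula.realize_sup, BoundedFormula.realize_bdEqual, vr,
      Term.realize, Sum.elim_inr, realize_num, realize_disjEq v xs n,
      funMap_zero_eq, funMap_succ_eq, Matrix.cons_val_zero, Matrix.cons_val_fin_one, sM_nmM]
    constructor
    · rintro (⟨i, hi, h⟩ | h)
      · exact ⟨i, hi.trans (Nat.le_succ n), h⟩
      · exact ⟨n + 1, le_refl _, h⟩
    · rintro ⟨i, hi, h⟩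
      rcases Nat.lt_or_ge i (n + 1) with hlt | hge
      · exact Or.inl ⟨i, Nat.lt_succ_iff.mp hlt, h⟩
      · have hie : i = n + 1 := le_antisymm hi hge
        exact Or.inr (hie ▸ h)

section model
variable (hM : M ⊨ R0)
include hM

lemma hR3 {m n : ℕ} (h : m ≠ n) : (nmM M m) ≠ nmM M n := by
  have := hM.realize_of_mem (axR3 m n)
    (Or.inl (Or.inl (Or.inr ⟨m, n, h, rfl⟩)))
  simpa [axR3, Sentence.Realize, Formula.Realize] using this

lemma hR5' {m n : ℕ} (h : m ≤ n) : leM (nmM M m) (nmM M n) := by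
  have := hM.realize_of_mem (axR5' m n)
    (Or.inr ⟨m, n, h, rfl⟩)
  simpa [axR5', Sentence.Realize, Formula.Realize] using this

lemma hR4 (n : ℕ) {x : M} (h : leM x (nmM M n)) : ∃ i ≤ n, x = nmM M i := by
  have := hM.realize_of_mem (axR4 n) (Or.inl (Or.inr ⟨n, rfl⟩))
  simp only [axR4, Sentence.Realize, Formula.Realize, BoundedFormula.realize_all,
    BoundedFormula.realize_imp, realize_leF] at this
  have hx := this x
  simp only [vr, Term.realize, Sum.elim_inr, realize_num, Fin.snoc_last] at hx
  have hle : (Fin.snoc (default : Fin 0 → M) x : Fin 1 → M) 0 = x := rfl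
  rw [hle] at hx
  have hd := hx h
  rw [realize_disjEq] at hd
  obtain ⟨i, hi, hxi⟩ := hd
  exact ⟨i, hi, by rw [← hxi, hle]⟩

/-- The key semantic induction. -/
lemma keySem (n : ℕ) : ∀ x : M, wbM x →
    (ltM x (nmM M n) ∨ leM (nmM M n) x) ∧ (leM x (nmM M n) ∨ ltM (nmM M n) x) := by
  induction n with
  | zero =>
    intro x hx
    constructor
    · exact Or.inr hx.1
    · by_cases h : x = nmM M 0
      · exact Or.inl (h ▸ hR5' hM (le_refl 0))
      · exact Or.inr ⟨hx.1, fun e => h e.symm⟩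
  | succ n ih =>
    intro x hx
    have hb := (ih x hx).2
    have ha : ltM x (nmM M (n+1)) ∨ leM (nmM M (n+1)) x := by
      rcases hb with h1 | h2
      · obtain ⟨i, hi, rfl⟩ := hR4 hM n h1
        exact Or.inl ⟨hR5' hM (hi.trans (Nat.le_succ n)),
          hR3 hM (by omega)⟩
      · exact Or.inr (hx.2 _ h2)
    refine ⟨ha, ?_⟩
    rcases ha with h1 | h2
    · exact Or.inl h1.1
    · by_cases h : x = nmM M (n+1)
      · exact Or.inl (h ▸ hR5' hM (le_refl _))
      · exact Or.inr ⟨h2, fun e => h e.symm⟩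

end model
end Sem2

/-- `R₀` proves, for every numeral `n̄`: for well-behaved `x`,
(a) `x < n̄ ∨ n̄ ≤ x` and (b) `x ≤ n̄ ∨ n̄ < x`. -/
theorem statement12 (n : ℕ) :
    (R0 ⊨ᵇ (∀' (wbF (vr 0) ⟹ (ltF (vr 0) (num n) ⊔ leF (num n) (vr 0))) : La.Sentence)) ∧
    (R0 ⊨ᵇ (∀' (wbF (vr 0) ⟹ (leF (vr 0) (num n) ⊔ ltF (num n) (vr 0))) : La.Sentence)) := by
  constructor <;>
  · intro Mo v xs
    have hM : Mo ⊨ R0 := Mo.is_model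
    simp only [BoundedFormula.realize_all, BoundedFormula.realize_imp,
      BoundedFormula.realize_sup, realize_leF, realize_ltF]
    intro x hx
    rw [realize_wbF] at hx
    have key := keySem hM n _ hx
    simp only [vr, Term.realize, Sum.elim_inr, realize_num]
    first
      | exact key.1
      | exact key.2
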